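/- arXiv:hep-th/0304136 — 2 statements merged into one kernel-verified Lean document; each statement's English description precedes it below -/
import Mathlib

section
/- For all i, j, k ∈ {1,2,3} the operators satisfy the sl(1|3) triple relations: [{A_i⁺, A_j⁻}, A_k⁺] = δ_{jk} A_i⁺ − δ_{ij} A_k⁺ and [{A_i⁺, A_j⁻}, A_k⁻] = −δ_{ik} A_j⁻ + δ_{ij} A_k⁻ (as linear operators on V). -/
open scoped BigOperators
open Finset

/-- Index set: triples Θ = (θ₁,θ₂,θ₃) with θᵢ ∈ {0,1}. -/
abbrev WIdx := Fin 3 → Fin 2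

/-- The 8-dimensional state space V = EuclideanSpace ℂ ({0,1}³). -/
abbrev WV := EuclideanSpace ℂ WIdx

/-- Orthonormal basis vector e_Θ. -/
noncomputable def eV (Θ : WIdx) : WV := EuclideanSpace.single Θ 1

/-- The basis (e_Θ)_Θ of V, as a `Basis`. -/
noncomputable def bV : Module.Basis WIdx ℂ WV := (EuclideanSpace.basisFun WIdx ℂ).toBasis

/-- q(Θ) = θ₁ + θ₂ + θ₃. -/
def qv (Θ : WIdx) : ℕ := ∑ j, (Θ j : ℕ)

/-- Sign factor (−1)^(θ₁ + ⋯ + θ_{i−1}). -/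
def sgnBelow (i : Fin 3) (Θ : WIdx) : ℂ :=
  (-1 : ℂ) ^ (∑ j : Fin 3, if (j : ℕ) < (i : ℕ) then (Θ j : ℕ) else 0)

/-- Sign factor (−1)^(θ₁ + ⋯ + θ_i). -/
def sgnUpTo (i : Fin 3) (Θ : WIdx) : ℂ :=
  (-1 : ℂ) ^ (∑ j : Fin 3, if (j : ℕ) ≤ (i : ℕ) then (Θ j : ℕ) else 0)

/-- A_i⁻ e_Θ = θ_i (−1)^(θ₁+⋯+θ_{i−1}) √(p−q(Θ)+1) e_{Θ[θ_i↦0]}. -/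
noncomputable def Aminus (p : ℕ) (i : Fin 3) : WV →ₗ[ℂ] WV :=
  bV.constr ℂ fun Θ =>
    (((Θ i : ℕ) : ℂ) * sgnBelow i Θ *
      ((Real.sqrt ((p : ℝ) - (qv Θ : ℝ) + 1) : ℝ) : ℂ)) • eV (Function.update Θ i 0)

/-- A_i⁺ e_Θ = (1−θ_i) (−1)^(θ₁+⋯+θ_{i−1}) √(p−q(Θ)) e_{Θ[θ_i↦1]}. -/
noncomputable def Aplus (p : ℕ) (i : Fin 3) : WV →ₗ[ℂ] WV :=
  bV.constr ℂ fun Θ =>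
    (((1 : ℂ) - ((Θ i : ℕ) : ℂ)) * sgnBelow i Θ *
      ((Real.sqrt ((p : ℝ) - (qv Θ : ℝ)) : ℝ) : ℂ)) • eV (Function.update Θ i 1)

/-- Anticommutator {X,Y} = XY + YX. -/
noncomputable def acommOp (X Y : WV →ₗ[ℂ] WV) : WV →ₗ[ℂ] WV := X ∘ₗ Y + Y ∘ₗ X

/-- Commutator [X,Y] = XY − YX. -/
noncomputable def commOp (X Y : WV →ₗ[ℂ] WV) : WV →ₗ[ℂ] WV := X ∘ₗ Y - Y ∘ₗ X

/-- Dimensionless Hamiltonian ĥ = Σᵢ {A_i⁺, A_i⁻}. -/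
noncomputable def hOp (p : ℕ) : WV →ₗ[ℂ] WV := ∑ i, acommOp (Aplus p i) (Aminus p i)

/-- Position operator r̂_k(t) = e^{−it} A_k⁺ + e^{it} A_k⁻. -/
noncomputable def rOp (p : ℕ) (k : Fin 3) (t : ℝ) : WV →ₗ[ℂ] WV :=
  Complex.exp (-(t : ℂ) * Complex.I) • Aplus p k +
    Complex.exp ((t : ℂ) * Complex.I) • Aminus p k

/-- Momentum operator p̂_k(t) = −i (e^{−it} A_k⁺ − e^{it} A_k⁻). -/
noncomputable def pOp (p : ℕ) (k : Fin 3) (t : ℝ) : WV →ₗ[ℂ] WV :=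
  (-Complex.I) • (Complex.exp (-(t : ℂ) * Complex.I) • Aplus p k -
    Complex.exp ((t : ℂ) * Complex.I) • Aminus p k)

/-- Levi-Civita symbol ε_{jkl} with ε_{123} = 1 (indices 0,1,2 here). -/
def eps (j k l : Fin 3) : ℂ :=
  if (j, k, l) = (0, 1, 2) ∨ (j, k, l) = (1, 2, 0) ∨ (j, k, l) = (2, 0, 1) then 1
  else if (j, k, l) = (2, 1, 0) ∨ (j, k, l) = (1, 0, 2) ∨ (j, k, l) = (0, 2, 1) then -1
  else 0

/-- Angular momentum M_j = −i Σ_{k,l} ε_{jkl} {A_k⁺, A_l⁻}. -/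
noncomputable def Mop (p : ℕ) (j : Fin 3) : WV →ₗ[ℂ] WV :=
  (-Complex.I) • ∑ k, ∑ l, eps j k l • acommOp (Aplus p k) (Aminus p l)

/-- Eigenvectors v_k(Θ,t) of the position operator r̂_k(t). -/
noncomputable def vVec (k : Fin 3) (t : ℝ) (Θ : WIdx) : WV :=
  (((Real.sqrt 2)⁻¹ : ℝ) : ℂ) •
    (eV (Function.update Θ k 0) +
      (sgnUpTo k Θ * Complex.exp (-(t : ℂ) * Complex.I)) • eV (Function.update Θ k 1))

/-- Eigenvectors ṽ_k(Θ,t) of the momentum operator p̂_k(t). -/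
noncomputable def vTilde (k : Fin 3) (t : ℝ) (Θ : WIdx) : WV :=
  (((Real.sqrt 2)⁻¹ : ℝ) : ℂ) •
    (eV (Function.update Θ k 0) -
      (Complex.I * sgnUpTo k Θ * Complex.exp (-(t : ℂ) * Complex.I)) • eV (Function.update Θ k 1))

/-- The non-stationary state z = (1/√2)(e_{(0,0,0)} + e_{(0,0,1)}). -/
noncomputable def zState : WV :=
  (((Real.sqrt 2)⁻¹ : ℝ) : ℂ) • (eV ![0, 0, 0] + eV ![0, 0, 1])

/-- The state x₁ = (1/√2)(e_{(0,1,0)} + e_{(1,1,0)}). -/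
noncomputable def x1State : WV :=
  (((Real.sqrt 2)⁻¹ : ℝ) : ℂ) • (eV ![0, 1, 0] + eV ![1, 1, 0])

local notation "⟪" x ", " y "⟫" => @inner ℂ _ _ x y

/-!
Let `f_i^±` be the Jordan–Wigner fermions, which act like `A_i^±` without the square roots, and
`N` the number operator, `N e_Θ = q(Θ) e_Θ`. Then `A_i⁺ = f_i⁺ √(p - N)` and
`A_i⁻ = f_i⁻ √(p + 1 - N)`. The `f_i^±` satisfy the canonical anticommutation relations and shift
`N` by `±1`; as `p ≥ 3 ≥ q(Θ)` the square roots square to `p - N` and `p + 1 - N`, and this gives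
`{A_i⁺, A_j⁻} = δ_ij (p - N) + f_i⁺ f_j⁻`. Now `[p - N, A_k^±] = ∓ A_k^±`, the operator
`f_i⁺ f_j⁻` commutes with every function of `N`, and
`[f_i⁺ f_j⁻, f_k^±] = f_i⁺ {f_j⁻, f_k^±} - {f_i⁺, f_k^±} f_j⁻` is read off from the
anticommutation relations.
-/
open Module (End)
open Function (update)

lemma mul_mul_sub_mul_mul {R : Type*} [Ring R] (a b c : R) :
    a * b * c - c * (a * b) = a * (b * c + c * b) - (a * c + c * a) * b := by
  noncomm_ring

lemma bV_apply (Θ : WIdx) : bV Θ = eV Θ := by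
  simp [eV, bV, EuclideanSpace.basisFun_apply]

lemma ext_eV {f g : End ℂ WV} (h : ∀ Θ, f (eV Θ) = g (eV Θ)) : f = g :=
  bV.ext fun Θ => by simpa only [bV_apply] using h Θ

lemma qv_update_add (Θ : WIdx) (i : Fin 3) (x : Fin 2) :
    qv (update Θ i x) + (Θ i : ℕ) = qv Θ + (x : ℕ) := by
  rw [qv, qv, ← Finset.add_sum_erase _ _ (Finset.mem_univ i),
    ← Finset.add_sum_erase _ _ (Finset.mem_univ i),
    Finset.sum_congr rfl fun j hj => by rw [Function.update_of_ne (Finset.ne_of_mem_erase hj)]]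
  simp only [Function.update_self]
  ring

lemma qv_le (Θ : WIdx) : qv Θ ≤ 3 := by
  calc qv Θ ≤ ∑ _j : Fin 3, 1 := Finset.sum_le_sum fun j _ => by omega
    _ = 3 := by simp

lemma Aplus_eV (p : ℕ) (i : Fin 3) (Θ : WIdx) :
    Aplus p i (eV Θ) =
      (((1 : ℂ) - ((Θ i : ℕ) : ℂ)) * sgnBelow i Θ *
        ((Real.sqrt ((p : ℝ) - (qv Θ : ℝ)) : ℝ) : ℂ)) • eV (update Θ i 1) := by
  rw [← bV_apply, Aplus, Module.Basis.constr_basis]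

lemma Aminus_eV (p : ℕ) (i : Fin 3) (Θ : WIdx) :
    Aminus p i (eV Θ) =
      (((Θ i : ℕ) : ℂ) * sgnBelow i Θ *
        ((Real.sqrt ((p : ℝ) - (qv Θ : ℝ) + 1) : ℝ) : ℂ)) • eV (update Θ i 0) := by
  rw [← bV_apply, Aminus, Module.Basis.constr_basis]

noncomputable def numberFun (φ : ℤ → ℂ) : End ℂ WV :=
  bV.constr ℂ fun Θ => φ (qv Θ) • eV Θ

lemma numberFun_eV (φ : ℤ → ℂ) (Θ : WIdx) : numberFun φ (eV Θ) = φ (qv Θ) • eV Θ := by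
  rw [← bV_apply, numberFun, Module.Basis.constr_basis, bV_apply]

lemma numberFun_one : numberFun 1 = 1 :=
  ext_eV fun Θ => by rw [numberFun_eV, Pi.one_apply, one_smul, Module.End.one_apply]

lemma numberFun_mul (φ ψ : ℤ → ℂ) : numberFun φ * numberFun ψ = numberFun (φ * ψ) :=
  ext_eV fun Θ => by
    rw [Module.End.mul_apply, numberFun_eV, map_smul, numberFun_eV, smul_smul, numberFun_eV,
      Pi.mul_apply, mul_comm]

lemma numberFun_add (φ ψ : ℤ → ℂ) : numberFun (φ + ψ) = numberFun φ + numberFun ψ :=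
  ext_eV fun Θ => by
    rw [LinearMap.add_apply, numberFun_eV, numberFun_eV, numberFun_eV, Pi.add_apply, add_smul]

lemma numberFun_smul (a : ℂ) (φ : ℤ → ℂ) : numberFun (a • φ) = a • numberFun φ :=
  ext_eV fun Θ => by
    rw [LinearMap.smul_apply, numberFun_eV, numberFun_eV, Pi.smul_apply, smul_eq_mul, mul_smul]

lemma numberFun_congr {φ ψ : ℤ → ℂ} (h : ∀ n : ℕ, n ≤ 3 → φ n = ψ n) :
    numberFun φ = numberFun ψ :=
  ext_eV fun Θ => by rw [numberFun_eV, numberFun_eV, h _ (qv_le Θ)]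

noncomputable def fermionPlus (i : Fin 3) : End ℂ WV :=
  bV.constr ℂ fun Θ => (((1 : ℂ) - ((Θ i : ℕ) : ℂ)) * sgnBelow i Θ) • eV (update Θ i 1)

noncomputable def fermionMinus (i : Fin 3) : End ℂ WV :=
  bV.constr ℂ fun Θ => (((Θ i : ℕ) : ℂ) * sgnBelow i Θ) • eV (update Θ i 0)

lemma fermionPlus_eV (i : Fin 3) (Θ : WIdx) :
    fermionPlus i (eV Θ) = (((1 : ℂ) - ((Θ i : ℕ) : ℂ)) * sgnBelow i Θ) • eV (update Θ i 1) := by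
  rw [← bV_apply, fermionPlus, Module.Basis.constr_basis]

lemma fermionMinus_eV (i : Fin 3) (Θ : WIdx) :
    fermionMinus i (eV Θ) = (((Θ i : ℕ) : ℂ) * sgnBelow i Θ) • eV (update Θ i 0) := by
  rw [← bV_apply, fermionMinus, Module.Basis.constr_basis]

lemma ext_eV_vecCons {f g : End ℂ WV}
    (h : ∀ a b c : Fin 2, f (eV ![a, b, c]) = g (eV ![a, b, c])) : f = g := by
  refine ext_eV fun Θ => ?_
  have hΘ : Θ = ![Θ 0, Θ 1, Θ 2] := by funext m; fin_cases m <;> rfl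
  rw [hΘ]; exact h _ _ _

lemma update_vecCons_zero (a b c x : Fin 2) : update ![a, b, c] 0 x = ![x, b, c] := by
  funext m; fin_cases m <;> rfl

lemma update_vecCons_one (a b c x : Fin 2) : update ![a, b, c] 1 x = ![a, x, c] := by
  funext m; fin_cases m <;> rfl

lemma update_vecCons_two (a b c x : Fin 2) : update ![a, b, c] 2 x = ![a, b, x] := by
  funext m; fin_cases m <;> rfl

lemma fermionPlus_anticomm_fermionMinus (i j : Fin 3) :
    fermionPlus i * fermionMinus j + fermionMinus j * fermionPlus i = if i = j then 1 else 0 := by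
  fin_cases i <;> fin_cases j <;> refine ext_eV_vecCons fun a b c => ?_ <;>
    fin_cases a <;> fin_cases b <;> fin_cases c <;>
    simp [fermionPlus_eV, fermionMinus_eV, update_vecCons_zero, update_vecCons_one,
      update_vecCons_two, sgnBelow, Fin.sum_univ_three]

lemma fermionPlus_anticomm (i j : Fin 3) :
    fermionPlus i * fermionPlus j + fermionPlus j * fermionPlus i = 0 := by
  fin_cases i <;> fin_cases j <;> refine ext_eV_vecCons fun a b c => ?_ <;>
    fin_cases a <;> fin_cases b <;> fin_cases c <;>
    simp [fermionPlus_eV, update_vecCons_zero, update_vecCons_one, update_vecCons_two,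
      sgnBelow, Fin.sum_univ_three]

lemma fermionMinus_anticomm (i j : Fin 3) :
    fermionMinus i * fermionMinus j + fermionMinus j * fermionMinus i = 0 := by
  fin_cases i <;> fin_cases j <;> refine ext_eV_vecCons fun a b c => ?_ <;>
    fin_cases a <;> fin_cases b <;> fin_cases c <;>
    simp [fermionMinus_eV, update_vecCons_zero, update_vecCons_one, update_vecCons_two,
      sgnBelow, Fin.sum_univ_three]

-- `F` maps the `q`-eigenspace of `N` into the `(q + d)`-eigenspace.
def ShiftsNumber (F : End ℂ WV) (d : ℤ) : Prop :=
  ∀ φ : ℤ → ℂ, numberFun φ * F = F * numberFun (fun n => φ (n + d))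

lemma ShiftsNumber.mul {F G : End ℂ WV} {d e : ℤ} (hF : ShiftsNumber F d)
    (hG : ShiftsNumber G e) : ShiftsNumber (F * G) (d + e) := fun φ => by
  rw [← mul_assoc, hF, mul_assoc, hG, mul_assoc, add_comm d e]
  simp only [add_assoc]

lemma ShiftsNumber.commute_numberFun {F : End ℂ WV} (hF : ShiftsNumber F 0) (φ : ℤ → ℂ) :
    numberFun φ * F = F * numberFun φ := by
  simpa only [add_zero] using hF φ

lemma shiftsNumber_fermionPlus (i : Fin 3) : ShiftsNumber (fermionPlus i) 1 := fun φ =>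
  ext_eV fun Θ => by
    have hq := qv_update_add Θ i 1
    simp only [Module.End.mul_apply, fermionPlus_eV, numberFun_eV, map_smul, smul_smul]
    generalize Θ i = x at hq ⊢
    fin_cases x
    · simp only [Fin.val_one, add_zero] at hq
      simp [hq, mul_comm]
    · simp

lemma shiftsNumber_fermionMinus (i : Fin 3) : ShiftsNumber (fermionMinus i) (-1) := fun φ =>
  ext_eV fun Θ => by
    have hq := qv_update_add Θ i 0
    simp only [Module.End.mul_apply, fermionMinus_eV, numberFun_eV, map_smul, smul_smul]
    generalize Θ i = x at hq ⊢
    fin_cases x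
    · simp
    · simp only [Fin.val_zero, add_zero] at hq
      simp [← hq, mul_comm]

lemma ShiftsNumber.numberFun_gap_commutator {F : End ℂ WV} {d : ℤ} (hF : ShiftsNumber F d)
    (c : ℂ) (φ : ℤ → ℂ) :
    numberFun (fun n => c - n) * (F * numberFun φ) - F * numberFun φ * numberFun (fun n => c - n) =
      -(d : ℂ) • (F * numberFun φ) := by
  have hfun : (fun n : ℤ => c - ((n + d : ℤ) : ℂ)) * φ =
      φ * (fun n : ℤ => c - n) + (-(d : ℂ)) • φ := by
    funext n; simp only [Pi.mul_apply, Pi.add_apply, Pi.smul_apply, smul_eq_mul]; push_cast; ring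
  rw [← mul_assoc, hF, mul_assoc, mul_assoc, numberFun_mul, numberFun_mul]
  beta_reduce
  rw [hfun, numberFun_add, numberFun_smul, mul_add, mul_smul_comm, add_sub_cancel_left]

noncomputable def rootGap (c : ℝ) (n : ℤ) : ℂ := (Real.sqrt (c - n) : ℂ)

lemma rootGap_add (c : ℝ) (d : ℤ) : (fun n => rootGap c (n + d)) = rootGap (c - d) := by
  funext n
  simp only [rootGap, Int.cast_add]
  ring_nf

lemma Aplus_eq (p : ℕ) (i : Fin 3) : Aplus p i = fermionPlus i * numberFun (rootGap p) :=
  ext_eV fun Θ => by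
    rw [Aplus_eV, Module.End.mul_apply, numberFun_eV, map_smul, fermionPlus_eV, smul_smul,
      rootGap]
    push_cast
    ring_nf

lemma Aminus_eq (p : ℕ) (i : Fin 3) :
    Aminus p i = fermionMinus i * numberFun (rootGap (p + 1)) :=
  ext_eV fun Θ => by
    rw [Aminus_eV, Module.End.mul_apply, numberFun_eV, map_smul, fermionMinus_eV, smul_smul,
      rootGap]
    push_cast
    ring_nf

lemma numberFun_rootGap_mul_self {c : ℝ} (hc : 3 ≤ c) :
    numberFun (rootGap c) * numberFun (rootGap c) = numberFun (fun n => (c : ℂ) - n) := by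
  rw [numberFun_mul]
  refine numberFun_congr fun n hn => ?_
  have : (0 : ℝ) ≤ c - n := by
    have : (n : ℝ) ≤ 3 := by exact_mod_cast hn
    linarith
  simp only [Pi.mul_apply, rootGap, Int.cast_natCast, ← Complex.ofReal_mul,
    Real.mul_self_sqrt this]
  push_cast; ring

lemma acommOp_Aplus_Aminus {p : ℕ} (hp : 3 ≤ p) (i j : Fin 3) :
    acommOp (Aplus p i) (Aminus p j) =
      (if i = j then (1 : ℂ) else 0) • numberFun (fun n => (p : ℂ) - n) +
        fermionPlus i * fermionMinus j := by
  have hp' : (3 : ℝ) ≤ p := by exact_mod_cast hp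
  have hPM : Aplus p i * Aminus p j =
      fermionPlus i * fermionMinus j * numberFun (fun n => (p : ℂ) + 1 - n) := by
    rw [Aplus_eq, Aminus_eq, mul_assoc, ← mul_assoc (numberFun _), shiftsNumber_fermionMinus,
      rootGap_add, mul_assoc, ← mul_assoc (fermionPlus i)]
    push_cast
    rw [sub_neg_eq_add, numberFun_rootGap_mul_self (by linarith)]
    push_cast; rfl
  have hMP : Aminus p j * Aplus p i =
      fermionMinus j * fermionPlus i * numberFun (fun n => (p : ℂ) - n) := by
    rw [Aplus_eq, Aminus_eq, mul_assoc, ← mul_assoc (numberFun _), shiftsNumber_fermionPlus,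
      rootGap_add, mul_assoc, ← mul_assoc (fermionMinus j)]
    push_cast
    rw [add_sub_cancel_right, numberFun_rootGap_mul_self hp']
    push_cast; rfl
  have hgap : numberFun (fun n => (p : ℂ) + 1 - n) =
      numberFun (fun n => (p : ℂ) - n) + 1 := by
    rw [← numberFun_one, ← numberFun_add]
    congr 1; funext n; simp only [Pi.add_apply, Pi.one_apply]; ring
  rw [acommOp, ← Module.End.mul_eq_comp, ← Module.End.mul_eq_comp, hPM, hMP, hgap, mul_add,
    mul_one, add_right_comm, ← add_mul, fermionPlus_anticomm_fermionMinus]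
  split_ifs <;> simp

lemma commOp_acommOp_Aplus_Aminus {p : ℕ} (hp : 3 ≤ p) (i j : Fin 3) {F : End ℂ WV} {d : ℤ}
    (hF : ShiftsNumber F d) (φ : ℤ → ℂ) :
    commOp (acommOp (Aplus p i) (Aminus p j)) (F * numberFun φ) =
      (if i = j then -(d : ℂ) else 0) • (F * numberFun φ) +
        (fermionPlus i * fermionMinus j * F - F * (fermionPlus i * fermionMinus j)) *
          numberFun φ := by
  have hcomm := ((shiftsNumber_fermionPlus i).mul (shiftsNumber_fermionMinus j)).commute_numberFun
  rw [commOp, ← Module.End.mul_eq_comp, ← Module.End.mul_eq_comp, acommOp_Aplus_Aminus hp,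
    add_mul, mul_add, smul_mul_assoc, mul_smul_comm, add_sub_add_comm, ← smul_sub,
    hF.numberFun_gap_commutator, smul_smul, mul_assoc F, hcomm,
    ← mul_assoc F (fermionPlus i * fermionMinus j), sub_mul, mul_assoc _ F]
  congr 1
  split_ifs <;> simp

/-- the sl(1|3) triple relations
[{A_i⁺, A_j⁻}, A_k⁺] = δ_{jk} A_i⁺ − δ_{ij} A_k⁺ and
[{A_i⁺, A_j⁻}, A_k⁻] = −δ_{ik} A_j⁻ + δ_{ij} A_k⁻. -/
theorem stmt0 (p : ℕ) (hp : 3 ≤ p) (i j k : Fin 3) :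
    commOp (acommOp (Aplus p i) (Aminus p j)) (Aplus p k) =
      (if j = k then (1 : ℂ) else 0) • Aplus p i -
        (if i = j then (1 : ℂ) else 0) • Aplus p k ∧
    commOp (acommOp (Aplus p i) (Aminus p j)) (Aminus p k) =
      -((if i = k then (1 : ℂ) else 0) • Aminus p j) +
        (if i = j then (1 : ℂ) else 0) • Aminus p k := by
  constructor
  · rw [Aplus_eq p k, commOp_acommOp_Aplus_Aminus hp i j (shiftsNumber_fermionPlus k),
      mul_mul_sub_mul_mul, add_comm (fermionMinus j * _), fermionPlus_anticomm_fermionMinus k j,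
      fermionPlus_anticomm, Aplus_eq p i]
    split_ifs <;> subst_vars <;> simp_all [Ne.symm]
  · rw [Aminus_eq p k, commOp_acommOp_Aplus_Aminus hp i j (shiftsNumber_fermionMinus k),
      mul_mul_sub_mul_mul, fermionMinus_anticomm, fermionPlus_anticomm_fermionMinus i k,
      Aminus_eq p j]
    split_ifs <;> subst_vars <;> simp_all
end

section
/- Oscillation of probabilities: for the non-stationary state z = (1/√2)(e_{(0,0,0)} + e_{(0,0,1)}) and for all t ∈ ℝ, the probability of measuring the third coordinate value +√p is |⟨v_3((0,0,0), t), z⟩|² = (1 + cos t)/2, and the probability of measuring −√p is |⟨v_3((0,0,1), t), z⟩|² = (1 − cos t)/2; these two probabilities sum to 1 and are time-dependent. -/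
open scoped BigOperators
open Finset

local notation "⟪" x ", " y "⟫" => @inner ℂ _ _ x y

/-! In the orthonormal basis `e_Θ`, both `v₃(Θ, t)` for `Θ ∈ {(0,0,0), (0,0,1)}` and `z` live in the
span of `e_{(0,0,0)}` and `e_{(0,0,1)}`, which gives `⟪v₃(Θ, t), z⟫ = (1 + (-1)^{q(Θ)} e^{it}) / 2`;
its squared modulus is `(1 ± cos t) / 2` because `|e^{it}| = 1`. -/

lemma inner_eV_eV (Θ Θ' : WIdx) : ⟪eV Θ, eV Θ'⟫ = if Θ = Θ' then 1 else 0 := by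
  simp [eV, EuclideanSpace.inner_single_left]

lemma inner_eV_add_smul_eV {a b : WIdx} (hab : a ≠ b) (w : ℂ) :
    ⟪eV a + w • eV b, eV a + eV b⟫ = 1 + (starRingEnd ℂ) w := by
  simp only [inner_add_left, inner_add_right, inner_smul_left, inner_eV_eV, hab, hab.symm]
  simp

lemma sgnUpTo_two (Θ : WIdx) : sgnUpTo 2 Θ = (-1) ^ qv Θ := by
  simp [sgnUpTo, qv, Fin.sum_univ_three]

lemma inner_vVec_two_zState (t : ℝ) (Θ : WIdx) (h₀ : Function.update Θ 2 0 = ![0, 0, 0])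
    (h₁ : Function.update Θ 2 1 = ![0, 0, 1]) :
    ⟪vVec 2 t Θ, zState⟫ = (1 + (-1) ^ qv Θ * Complex.exp (t * Complex.I)) / 2 := by
  have hne : (![0, 0, 0] : WIdx) ≠ ![0, 0, 1] := by decide
  have hc : (((Real.sqrt 2)⁻¹ : ℝ) : ℂ) * (((Real.sqrt 2)⁻¹ : ℝ) : ℂ) = 1 / 2 := by
    rw [← Complex.ofReal_mul, ← mul_inv, Real.mul_self_sqrt zero_le_two]; push_cast; ring
  rw [vVec, zState, h₀, h₁, inner_smul_left, inner_smul_right, inner_eV_add_smul_eV hne,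
    Complex.conj_ofReal, ← mul_assoc, hc, sgnUpTo_two, map_mul, ← Complex.exp_conj]
  simp [Complex.conj_ofReal]
  ring

lemma norm_one_add_mul_exp_sq {s : ℝ} (hs : s ^ 2 = 1) (t : ℝ) :
    ‖(1 + s * Complex.exp (t * Complex.I)) / 2‖ ^ 2 = (1 + s * Real.cos t) / 2 := by
  rw [Complex.sq_norm, Complex.normSq_apply]
  simp [Complex.exp_ofReal_mul_I_re, Complex.exp_ofReal_mul_I_im]
  linear_combination (Real.sin_sq_add_cos_sq t + hs * Real.cos t ^ 2 + hs * Real.sin t ^ 2) / 4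

lemma norm_inner_vVec_two_zState_sq (t : ℝ) (Θ : WIdx) (h₀ : Function.update Θ 2 0 = ![0, 0, 0])
    (h₁ : Function.update Θ 2 1 = ![0, 0, 1]) :
    ‖⟪vVec 2 t Θ, zState⟫‖ ^ 2 = (1 + (-1) ^ qv Θ * Real.cos t) / 2 := by
  rw [inner_vVec_two_zState t Θ h₀ h₁, ← norm_one_add_mul_exp_sq (by simp [← pow_mul]) t]
  push_cast
  rfl

theorem stmt18_general (t : ℝ) :
    ‖(⟪vVec 2 t ![0, 0, 0], zState⟫ : ℂ)‖ ^ 2 = (1 + Real.cos t) / 2 ∧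
    ‖(⟪vVec 2 t ![0, 0, 1], zState⟫ : ℂ)‖ ^ 2 = (1 - Real.cos t) / 2 ∧
    ‖(⟪vVec 2 t ![0, 0, 0], zState⟫ : ℂ)‖ ^ 2 +
      ‖(⟪vVec 2 t ![0, 0, 1], zState⟫ : ℂ)‖ ^ 2 = 1 ∧
    (∃ t₁ t₂ : ℝ,
      ‖(⟪vVec 2 t₁ ![0, 0, 0], zState⟫ : ℂ)‖ ^ 2 ≠
        ‖(⟪vVec 2 t₂ ![0, 0, 0], zState⟫ : ℂ)‖ ^ 2) := by
  have h₀ (t : ℝ) : ‖⟪vVec 2 t ![0, 0, 0], zState⟫‖ ^ 2 = (1 + Real.cos t) / 2 := by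
    simpa [qv, Fin.sum_univ_three] using
      norm_inner_vVec_two_zState_sq t ![0, 0, 0] (by decide) (by decide)
  have h₁ : ‖⟪vVec 2 t ![0, 0, 1], zState⟫‖ ^ 2 = (1 - Real.cos t) / 2 := by
    simpa [qv, Fin.sum_univ_three, sub_eq_add_neg] using
      norm_inner_vVec_two_zState_sq t ![0, 0, 1] (by decide) (by decide)
  refine ⟨h₀ t, h₁, by rw [h₀, h₁]; ring, 0, Real.pi, ?_⟩
  rw [h₀, h₀, Real.cos_zero, Real.cos_pi]
  norm_num

/-- oscillation of probabilities for the state z: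
|⟨v₃((0,0,0),t), z⟩|² = (1 + cos t)/2, |⟨v₃((0,0,1),t), z⟩|² = (1 − cos t)/2;
they sum to 1 and are time-dependent. -/
theorem stmt18 (p : ℕ) (hp : 3 ≤ p) (t : ℝ) :
    ‖(⟪vVec 2 t ![0, 0, 0], zState⟫ : ℂ)‖ ^ 2 = (1 + Real.cos t) / 2 ∧
    ‖(⟪vVec 2 t ![0, 0, 1], zState⟫ : ℂ)‖ ^ 2 = (1 - Real.cos t) / 2 ∧
    ‖(⟪vVec 2 t ![0, 0, 0], zState⟫ : ℂ)‖ ^ 2 +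
      ‖(⟪vVec 2 t ![0, 0, 1], zState⟫ : ℂ)‖ ^ 2 = 1 ∧
    (∃ t₁ t₂ : ℝ,
      ‖(⟪vVec 2 t₁ ![0, 0, 0], zState⟫ : ℂ)‖ ^ 2 ≠
        ‖(⟪vVec 2 t₂ ![0, 0, 0], zState⟫ : ℂ)‖ ^ 2) :=
  stmt18_general t
end
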